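/- arXiv:2504.02289 — 3 statements merged into one kernel-verified Lean document; each statement's English description precedes it below -/
import Mathlib

section
/- Let H = (V,E) be a connected hypergraph and t = |V|. Then S(H^t) = t·S(H) and Mod_1(Ω(H)) = S(H), where H^t replaces each hyperedge by t parallel copies. -/
open Finset
open scoped Classical

noncomputable section

variable {V E : Type*}

/-- The set of hyperedges meeting at least two parts of the partition `P` (the cut `δ(P)`). -/
def hcut [Fintype V] [DecidableEq V] [Fintype E] (edge : E → Finset V)
    (P : Finpartition (univ : Finset V)) : Finset E :=
  univ.filter fun e => ∃ p ∈ P.parts, ∃ q ∈ P.parts,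
    p ≠ q ∧ (edge e ∩ p).Nonempty ∧ (edge e ∩ q).Nonempty

/-- The hyperedges entirely contained in the vertex set `X`. -/
def edgesIn [DecidableEq V] [Fintype E] (edge : E → Finset V) (X : Finset V) : Finset E :=
  univ.filter fun e => edge e ⊆ X

/-- The strength `S(H)`. -/
def strength [Fintype V] [DecidableEq V] [Fintype E] (edge : E → Finset V) : ℝ :=
  sInf { r : ℝ | ∃ P : Finpartition (univ : Finset V), 2 ≤ P.parts.card ∧
    r = ((hcut edge P).card : ℝ) / ((P.parts.card : ℝ) - 1) }

/-- The weighted strength `S_σ(H)`. -/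
def strengthW [Fintype V] [DecidableEq V] [Fintype E] (σ : E → ℝ) (edge : E → Finset V) : ℝ :=
  sInf { r : ℝ | ∃ P : Finpartition (univ : Finset V), 2 ≤ P.parts.card ∧
    r = (∑ e ∈ hcut edge P, σ e) / ((P.parts.card : ℝ) - 1) }

/-- The fractional arboricity `D(H)`. -/
def arboricity [Fintype V] [DecidableEq V] [Fintype E] (edge : E → Finset V) : ℝ :=
  sSup { r : ℝ | ∃ X : Finset V, 2 ≤ X.card ∧
    r = ((edgesIn edge X).card : ℝ) / ((X.card : ℝ) - 1) }

/-- Connectivity of the subhypergraph induced by the vertex set `W`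
(only hyperedges contained in `W` are used). -/
def ConnectedIn (edge : E → Finset V) (W : Finset V) : Prop :=
  ∀ X ⊆ W, X.Nonempty → X ≠ W →
    ∃ e, edge e ⊆ W ∧ (edge e ∩ X).Nonempty ∧ ((edge e ∩ W) \ X).Nonempty

/-- Connectivity of the trace hypergraph on the vertex set `W`
(each hyperedge is replaced by its intersection with `W`, as in vertex deletion). -/
def ConnectedOn (edge : E → Finset V) (W : Finset V) : Prop :=
  ∀ X ⊆ W, X.Nonempty → X ≠ W →
    ∃ e, ((edge e ∩ W) ∩ X).Nonempty ∧ ((edge e ∩ W) \ X).Nonempty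

/-- A hypergraph is connected if every nonempty proper vertex subset is crossed by a hyperedge. -/
def HConnected [Fintype V] (edge : E → Finset V) : Prop :=
  ConnectedIn edge univ

/-- `H` is partition-connected if `|δ(P)| ≥ |P| - 1` for every partition `P` of `V`. -/
def PartitionConnected [Fintype V] [DecidableEq V] [Fintype E] (edge : E → Finset V) : Prop :=
  ∀ P : Finpartition (univ : Finset V), P.parts.card - 1 ≤ (hcut edge P).card

/-- A partition is feasible if each part induces a connected subhypergraph. -/
def Feasible [Fintype V] [DecidableEq V] (edge : E → Finset V) (P : Finpartition (univ : Finset V)) : Prop :=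
  ∀ p ∈ P.parts, ConnectedIn edge p

/-- The edges of the shrunk hypergraph `H_P`: vertices are the parts of `P`, and a hyperedge
becomes the set of parts it meets. -/
def shrunkEdge [Fintype V] [DecidableEq V] (edge : E → Finset V)
    (P : Finpartition (univ : Finset V)) (e : E) : Finset {p : Finset V // p ∈ P.parts} :=
  univ.filter fun p => (edge e ∩ p.1).Nonempty

/-- The shrunk hypergraph `H_P` is vertex-biconnected: it is connected and no single
vertex deletion disconnects it. -/
def ShrunkBiconnected [Fintype V] [DecidableEq V] [Fintype E] (edge : E → Finset V)
    (P : Finpartition (univ : Finset V)) : Prop :=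
  ConnectedIn (shrunkEdge edge P) univ ∧
  ∀ p : {p : Finset V // p ∈ P.parts}, ConnectedOn (shrunkEdge edge P) (univ \ {p})

/-- `F` is a hypertree: a hyperforest of size `|V| - 1`. -/
def IsHypertree [Fintype V] [DecidableEq V] (edge : E → Finset V) (F : Finset E) : Prop :=
  F.card = Fintype.card V - 1 ∧
  ∀ X : Finset V, X.Nonempty → (F.filter fun e => edge e ⊆ X).card ≤ X.card - 1

/-- `m` is the multiplicity vector of a multiset of hyperedges forming a hypertree on `V`. -/
def IsMultiTree [Fintype V] [DecidableEq V] [Fintype E] (edge : E → Finset V) (m : E → ℕ) : Prop :=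
  (∑ e, m e) = Fintype.card V - 1 ∧
  ∀ X : Finset V, X.Nonempty → (∑ e ∈ edgesIn edge X, m e) ≤ X.card - 1

/-- The multi-tree family `Ω(H)` as a set of usage vectors in `ℝ^E`. -/
def OmegaSet [Fintype V] [DecidableEq V] [Fintype E] (edge : E → Finset V) : Set (E → ℝ) :=
  { x | ∃ m : E → ℕ, IsMultiTree edge m ∧ x = fun e => (m e : ℝ) }

/-- The hypertree family `Γ(H)` as a set of (indicator) usage vectors in `ℝ^E`. -/
def GammaSet [Fintype V] [DecidableEq V] [Fintype E] (edge : E → Finset V) : Set (E → ℝ) :=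
  { x | ∃ F : Finset E, IsHypertree edge F ∧ x = fun e => if e ∈ F then (1 : ℝ) else 0 }

/-- The admissible set of a family of usage vectors. -/
def AdmSet [Fintype E] (G : Set (E → ℝ)) : Set (E → ℝ) :=
  { ρ | (∀ e, 0 ≤ ρ e) ∧ ∀ x ∈ G, 1 ≤ ∑ e, x e * ρ e }

/-- The weighted 1-modulus of a family of usage vectors. -/
def Mod1 [Fintype E] (σ : E → ℝ) (G : Set (E → ℝ)) : ℝ :=
  sInf { t : ℝ | ∃ ρ ∈ AdmSet G, t = ∑ e, σ e * ρ e }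

/-- `w` is an extreme point of `S`: it lies in `S` and is not the midpoint of two
distinct points of `S`. -/
def IsExtremePt [Fintype E] (S : Set (E → ℝ)) (w : E → ℝ) : Prop :=
  w ∈ S ∧ ∀ y ∈ S, ∀ z ∈ S, (∀ e, w e = (y e + z e) / 2) → y = z

/-- The rank function of the hypergraphic matroid `M(H)` (Frank et al.):
`r(F) = min { |V| - |P| + |δ_F(P)| }` over partitions `P` of `V`. -/
def hrank [Fintype V] [DecidableEq V] [Fintype E] [DecidableEq E]
    (edge : E → Finset V) (F : Finset E) : ℕ :=
  sInf { n : ℕ | ∃ P : Finpartition (univ : Finset V),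
    n = Fintype.card V - P.parts.card + (hcut edge P ∩ F).card }

/-- The (unweighted) strength of the hypergraphic matroid `M(H)`. -/
def mstrength [Fintype V] [DecidableEq V] [Fintype E] [DecidableEq E]
    (edge : E → Finset V) : ℝ :=
  sInf { r : ℝ | ∃ X : Finset E, hrank edge (univ \ X) < hrank edge univ ∧
    r = (X.card : ℝ) / ((hrank edge univ : ℝ) - (hrank edge (univ \ X) : ℝ)) }

/-- The fractional arboricity of the hypergraphic matroid `M(H)`. -/
def marboricity [Fintype V] [DecidableEq V] [Fintype E] [DecidableEq E]
    (edge : E → Finset V) : ℝ :=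
  sSup { r : ℝ | ∃ X : Finset E, 0 < hrank edge X ∧ r = (X.card : ℝ) / (hrank edge X : ℝ) }

end

/-!
Every cut of `H^t` consists of `t` copies of each hyperedge of the corresponding cut of `H`, so
all the ratios defining the strength scale by `t`.

For the modulus, every multi-tree crosses a partition `P` at least `|P| - 1` times, so the
density `1 / (|P| - 1)` on the cut `δ(P)` is admissible, whence `Mod₁(Ω) ≤ S(H)`. Conversely, given
an admissible `ρ`, scan the hyperedges by increasing `ρ` (Kruskal) and give each one the
multiplicity by which it lowers the number of components `c`. Submodularity of `c` makes this a
multi-tree `m`. Since the partition into components of `A` is cut only by hyperedges outside `A`,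
`S(H) (c(A) - 1) ≤ |E \ A|`, and Abel summation along the scan turns these bounds into
`S(H) ≤ S(H) Σ m ρ ≤ Σ ρ`.
-/

namespace HypergraphModulus

open Finset

variable {V E : Type*}

section Components

variable (edge : E → Finset V)

def Linked (A : Finset E) (u v : V) : Prop := ∃ a ∈ A, u ∈ edge a ∧ v ∈ edge a

def Reach (A : Finset E) : V → V → Prop := Relation.ReflTransGen (Linked edge A)

variable [Fintype V] in
noncomputable def component (A : Finset E) (v : V) : Finset V := {u | Reach edge A v u}

variable [Fintype V] [DecidableEq V] in
noncomputable def components (A : Finset E) : Finset (Finset V) := univ.image (component edge A)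

variable [Fintype V] [DecidableEq V] in
noncomputable def numComponents (A : Finset E) : ℕ := #(components edge A)

variable {edge} {A B : Finset E} {e : E} {u v w : V}

lemma Linked.symm (h : Linked edge A u v) : Linked edge A v u :=
  let ⟨a, ha, hu, hv⟩ := h; ⟨a, ha, hv, hu⟩

lemma Reach.refl (v : V) : Reach edge A v v := Relation.ReflTransGen.refl

lemma Reach.symm (h : Reach edge A u v) : Reach edge A v u :=
  Relation.ReflTransGen.mono (fun _ _ => Linked.symm) _ _ (Relation.ReflTransGen.swap _ _ h)

lemma Reach.trans (h : Reach edge A u v) (h' : Reach edge A v w) : Reach edge A u w :=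
  Relation.ReflTransGen.trans h h'

lemma Reach.mono (hBA : B ⊆ A) (h : Reach edge B u v) : Reach edge A u v :=
  Relation.ReflTransGen.mono (fun _ _ ⟨a, ha, hx, hy⟩ => ⟨a, hBA ha, hx, hy⟩) _ _ h

lemma reach_of_mem (ha : e ∈ A) (hu : u ∈ edge e) (hv : v ∈ edge e) : Reach edge A u v :=
  Relation.ReflTransGen.single ⟨e, ha, hu, hv⟩

lemma reach_insert_iff : Reach edge (insert e A) u v ↔ Reach edge A u v ∨
    ((∃ x ∈ edge e, Reach edge A u x) ∧ ∃ y ∈ edge e, Reach edge A v y) := by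
  have hsub : A ⊆ insert e A := subset_insert e A
  constructor
  · intro h
    induction h with
    | refl => exact Or.inl (Reach.refl u)
    | @tail w v' _ hstep ih =>
      obtain ⟨a, ha, hw, hv'⟩ := hstep
      rcases mem_insert.1 ha with rfl | haA
      · exact Or.inr ⟨ih.elim (fun h => ⟨w, hw, h⟩) And.left, v', hv', Reach.refl v'⟩
      · have step : Reach edge A w v' := reach_of_mem haA hw hv'
        rcases ih with h | ⟨h1, y, hy, h2⟩
        · exact Or.inl (h.trans step)
        · exact Or.inr ⟨h1, y, hy, step.symm.trans h2⟩
  · rintro (h | ⟨⟨x, hx, h1⟩, y, hy, h2⟩)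
    · exact h.mono hsub
    · exact ((h1.mono hsub).trans (reach_of_mem (mem_insert_self e A) hx hy)).trans
        (h2.mono hsub).symm

variable [Fintype V]

lemma mem_component : u ∈ component edge A v ↔ Reach edge A v u := by
  simp [component]

lemma mem_component_self (v : V) : v ∈ component edge A v :=
  mem_component.2 (Reach.refl v)

lemma component_eq (h : Reach edge A u v) : component edge A u = component edge A v := by
  ext w
  simp only [mem_component]
  exact ⟨h.symm.trans, h.trans⟩

lemma component_insert_of_not_reach (h : ∀ x ∈ edge e, ¬ Reach edge A v x) :
    component edge (insert e A) v = component edge A v := by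
  ext u
  simp only [mem_component, reach_insert_iff]
  exact ⟨fun h' => h'.resolve_right fun ⟨⟨x, hx, hvx⟩, _⟩ => h x hx hvx, Or.inl⟩

lemma component_insert_of_reach {x w : V} (hx : x ∈ edge e) (hvx : Reach edge A v x)
    (hw : w ∈ edge e) : component edge (insert e A) v = component edge (insert e A) w :=
  component_eq <| (hvx.mono (subset_insert e A)).trans
    (reach_of_mem (mem_insert_self e A) hx hw)

variable [DecidableEq V]

lemma component_mem_components (v : V) : component edge A v ∈ components edge A :=
  mem_image_of_mem _ (mem_univ v)

lemma eq_component_of_mem {p : Finset V} (hp : p ∈ components edge A) (hv : v ∈ p) :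
    p = component edge A v := by
  obtain ⟨u, -, rfl⟩ := mem_image.1 hp
  exact component_eq (mem_component.1 hv)

variable (edge A) in
noncomputable def componentPartition : Finpartition (univ : Finset V) where
  parts := components edge A
  supIndep := by
    rw [supIndep_iff_pairwiseDisjoint]
    intro p hp q hq hpq
    refine disjoint_left.2 fun w hwp hwq => hpq ?_
    rw [eq_component_of_mem hp hwp, eq_component_of_mem hq hwq]
  sup_parts := eq_univ_of_forall fun v =>
    mem_sup.2 ⟨component edge A v, component_mem_components v, mem_component_self v⟩
  bot_notMem := fun h => by
    obtain ⟨v, -, hv⟩ := mem_image.1 h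
    simpa [hv] using mem_component_self (edge := edge) (A := A) v

lemma hcut_componentPartition_subset [Fintype E] : hcut edge (componentPartition edge A) ⊆ Aᶜ := by
  intro e he
  simp only [hcut, mem_filter, mem_univ, true_and] at he
  obtain ⟨p, hp, q, hq, hpq, ⟨x, hx⟩, ⟨y, hy⟩⟩ := he
  rw [mem_inter] at hx hy
  refine mem_compl.2 fun heA => hpq ?_
  rw [eq_component_of_mem hp hx.2, eq_component_of_mem hq hy.2]
  exact component_eq (reach_of_mem heA hx.1 hy.1)

-- Adding `e` merges the components of `A` that meet `e` into a single one.
lemma numComponents_insert_add_card (he : (edge e).Nonempty) :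
    numComponents edge (insert e A) + #((edge e).image (component edge A)) =
      numComponents edge A + 1 := by
  obtain ⟨x₀, hx₀⟩ := he
  set M := (edge e).image (component edge A)
  set U := component edge (insert e A) x₀
  have hM : M ⊆ components edge A := image_subset_image (subset_univ _)
  have hcomponents : components edge (insert e A) = insert U (components edge A \ M) := by
    ext p
    simp only [components, mem_image, mem_insert, mem_sdiff, mem_univ, true_and, M]
    constructor
    · rintro ⟨v, rfl⟩
      by_cases hmeet : ∃ x ∈ edge e, Reach edge A v x
      · obtain ⟨x, hx, hvx⟩ := hmeet
        exact Or.inl (component_insert_of_reach hx hvx hx₀)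
      · push Not at hmeet
        rw [component_insert_of_not_reach hmeet]
        exact Or.inr ⟨⟨v, rfl⟩, fun ⟨y, hy, hvy⟩ =>
          hmeet y hy (mem_component.1 (hvy ▸ mem_component_self y))⟩
    · rintro (rfl | ⟨⟨v, rfl⟩, hnot⟩)
      · exact ⟨x₀, rfl⟩
      · exact ⟨v, component_insert_of_not_reach fun x hx hvx =>
          hnot ⟨x, hx, (component_eq hvx).symm⟩⟩
  have hU : U ∉ components edge A \ M := by
    rw [mem_sdiff, not_and_not_right]
    intro hUA
    obtain ⟨v, -, hv⟩ := mem_image.1 hUA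
    have hvx₀ : Reach edge A v x₀ := mem_component.1 (hv ▸ mem_component_self x₀)
    exact mem_image.2 ⟨x₀, hx₀, by rw [← component_eq hvx₀, hv]⟩
  have hMcard := card_le_card hM
  rw [numComponents, hcomponents, card_insert_of_notMem hU, card_sdiff_of_subset hM,
    numComponents]
  omega

lemma numComponents_insert_of_eq_empty (he : edge e = ∅) :
    numComponents edge (insert e A) = numComponents edge A := by
  unfold numComponents components
  congr 1
  exact image_congr fun v _ => component_insert_of_not_reach (by simp [he])

lemma card_image_component_le (hBA : B ⊆ A) (e : E) :
    #((edge e).image (component edge A)) ≤ #((edge e).image (component edge B)) := by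
  have : (edge e).image (component edge A) = ((edge e).image (component edge B)).image
      (fun p => ({u | ∃ x ∈ p, Reach edge A x u} : Finset V)) := by
    rw [image_image]
    refine image_congr fun x _ => ?_
    ext u
    simp only [Function.comp_apply, mem_component, mem_filter, mem_univ, true_and]
    exact ⟨fun h => ⟨x, Reach.refl x, h⟩, fun ⟨y, hy, hyu⟩ => (hy.mono hBA).trans hyu⟩
  rw [this]
  exact card_image_le

lemma numComponents_insert_le (A : Finset E) (e : E) :
    numComponents edge (insert e A) ≤ numComponents edge A := by
  rcases (edge e).eq_empty_or_nonempty with he | he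
  · rw [numComponents_insert_of_eq_empty he]
  · have := numComponents_insert_add_card (A := A) he
    have := card_pos.2 (he.image (component edge A))
    omega

lemma numComponents_submodular (hBA : B ⊆ A) (e : E) :
    numComponents edge A + numComponents edge (insert e B) ≤
      numComponents edge B + numComponents edge (insert e A) := by
  rcases (edge e).eq_empty_or_nonempty with he | he
  · rw [numComponents_insert_of_eq_empty he, numComponents_insert_of_eq_empty he, add_comm]
  · have := numComponents_insert_add_card (A := A) he
    have := numComponents_insert_add_card (A := B) he
    have := card_image_component_le (edge := edge) hBA e
    omega

lemma numComponents_empty : numComponents edge (∅ : Finset E) = Fintype.card V := by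
  have hsingleton (v : V) : component edge (∅ : Finset E) v = {v} := by
    ext u
    rw [mem_component, mem_singleton]
    refine ⟨fun h => ?_, by rintro rfl; exact Reach.refl _⟩
    rcases h.cases_head with rfl | ⟨_, ⟨a, ha, -⟩, -⟩
    · rfl
    · exact absurd ha (notMem_empty a)
  rw [numComponents, components, image_congr fun v _ => hsingleton v,
    card_image_of_injective _ singleton_injective, card_univ]

lemma numComponents_univ [Fintype E] [Nonempty V] (hconn : HConnected edge) :
    numComponents edge (univ : Finset E) = 1 := by
  have hall (v : V) : component edge univ v = univ := by
    by_contra hne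
    obtain ⟨a, -, ⟨y, hy⟩, ⟨x, hx⟩⟩ :=
      hconn _ (subset_univ _) ⟨v, mem_component_self v⟩ hne
    simp only [mem_inter, mem_sdiff] at hy hx
    exact hx.2 (mem_component.2
      ((mem_component.1 hy.2).trans (reach_of_mem (mem_univ a) hy.1 hx.1.1)))
  rw [numComponents, components, image_congr fun v _ => hall v,
    image_const univ_nonempty, card_singleton]

lemma component_edgesIn_of_notMem [Fintype E] {X : Finset V} {u : V} (hu : u ∉ X) :
    component edge (edgesIn edge X) u = {u} := by
  ext w
  rw [mem_component, mem_singleton]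
  refine ⟨fun h => ?_, by rintro rfl; exact Reach.refl _⟩
  rcases h.cases_head with h' | ⟨_, ⟨a, ha, hu', -⟩, -⟩
  · exact h'.symm
  · exact absurd ((mem_filter.1 ha).2 hu') hu

lemma card_add_one_le_numComponents_edgesIn [Fintype E] {X : Finset V} (hX : X.Nonempty) :
    Fintype.card V + 1 ≤ numComponents edge (edgesIn edge X) + #X := by
  obtain ⟨x₀, hx₀⟩ := hX
  set c := component edge (edgesIn edge X)
  have hinj : Set.InjOn c ↑Xᶜ := fun u hu v hv huv => by
    rw [mem_coe, mem_compl] at hu hv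
    simpa [c, component_edgesIn_of_notMem hu, component_edgesIn_of_notMem hv] using huv
  have hx₀c : c x₀ ∉ Xᶜ.image c := fun h => by
    obtain ⟨u, hu, hux⟩ := mem_image.1 h
    have : x₀ ∈ ({u} : Finset V) := by
      rw [← component_edgesIn_of_notMem (edge := edge) (mem_compl.1 hu)]
      rw [show component edge (edgesIn edge X) u = c x₀ from hux]
      exact mem_component_self x₀
    exact mem_compl.1 hu (mem_singleton.1 this ▸ hx₀)
  have hsub : insert (c x₀) (Xᶜ.image c) ⊆ components edge (edgesIn edge X) :=
    insert_subset (component_mem_components x₀) (image_subset_image (subset_univ _))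
  have hcard := card_le_card hsub
  rw [card_insert_of_notMem hx₀c, card_image_of_injOn hinj, card_compl] at hcard
  have := Finset.card_le_univ X
  rw [numComponents]
  omega

end Components

section Strength

variable [Fintype V] [DecidableEq V] [Fintype E] {edge : E → Finset V}

lemma hcut_ratio_nonneg (P : Finpartition (univ : Finset V)) (hP : 2 ≤ #P.parts) :
    0 ≤ (#(hcut edge P) : ℝ) / (#P.parts - 1) := by
  have : (2 : ℝ) ≤ #P.parts := by exact_mod_cast hP
  exact div_nonneg (Nat.cast_nonneg _) (by linarith)

lemma strength_nonneg : 0 ≤ strength edge :=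
  Real.sInf_nonneg fun _ ⟨P, hP, hr⟩ => hr ▸ hcut_ratio_nonneg P hP

lemma strength_le (P : Finpartition (univ : Finset V)) (hP : 2 ≤ #P.parts) :
    strength edge ≤ (#(hcut edge P) : ℝ) / (#P.parts - 1) :=
  csInf_le ⟨0, fun _ ⟨Q, hQ, hr⟩ => hr ▸ hcut_ratio_nonneg Q hQ⟩ ⟨P, hP, rfl⟩

lemma strength_mul_numComponents_sub_one_le (A : Finset E) :
    strength edge * ((numComponents edge A : ℝ) - 1) ≤ Fintype.card E - #A := by
  have hA : (#A : ℝ) ≤ Fintype.card E := by exact_mod_cast card_le_univ A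
  rcases lt_or_ge (numComponents edge A) 2 with h | h
  · have : (numComponents edge A : ℝ) ≤ 1 := by exact_mod_cast Nat.le_of_lt_succ h
    nlinarith [strength_nonneg (edge := edge)]
  · have h2 : (2 : ℝ) ≤ numComponents edge A := by exact_mod_cast h
    have hcut_le : (#(hcut edge (componentPartition edge A)) : ℝ) ≤ Fintype.card E - #A := by
      have := card_le_card (hcut_componentPartition_subset (edge := edge) (A := A))
      rw [card_compl] at this
      rw [← Nat.cast_sub (card_le_univ A)]
      exact_mod_cast this
    calc strength edge * ((numComponents edge A : ℝ) - 1)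
        ≤ (#(hcut edge (componentPartition edge A)) : ℝ) / (numComponents edge A - 1) *
            (numComponents edge A - 1) :=
          mul_le_mul_of_nonneg_right (strength_le (componentPartition edge A) h) (by linarith)
      _ = #(hcut edge (componentPartition edge A)) := div_mul_cancel₀ _ (by linarith)
      _ ≤ Fintype.card E - #A := hcut_le

lemma strength_parallel (edge : E → Finset V) (t : ℕ) :
    strength (fun p : E × Fin t => edge p.1) = t * strength edge := by
  have hcut_parallel (P : Finpartition (univ : Finset V)) :
      #(hcut (fun p : E × Fin t => edge p.1) P) = #(hcut edge P) * t := by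
    have : hcut (fun p : E × Fin t => edge p.1) P = hcut edge P ×ˢ univ := by
      ext ⟨e, i⟩
      simp [hcut]
    rw [this, card_product, card_univ, Fintype.card_fin]
  rw [strength, strength, ← smul_eq_mul, ← Real.sInf_smul_of_nonneg (Nat.cast_nonneg t)]
  congr 1
  ext r
  simp only [Set.mem_smul_set, Set.mem_ofPred_eq, smul_eq_mul, hcut_parallel]
  constructor
  · rintro ⟨P, hP, rfl⟩
    exact ⟨_, ⟨P, hP, rfl⟩, by push_cast; ring⟩
  · rintro ⟨_, ⟨P, hP, rfl⟩, rfl⟩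
    exact ⟨P, hP, by push_cast; ring⟩

end Strength

-- Abel summation; the term `c * (N - S * F 0)` strengthens the induction hypothesis.
lemma mul_sum_mul_sub_succ_le {S : ℝ} : ∀ {N : ℕ} {r : Fin N → ℝ} {F : ℕ → ℝ} {c : ℝ},
    Monotone r → (∀ i, c ≤ r i) → F N = 0 → (∀ i : Fin N, S * F i ≤ N - i) →
      S * ∑ i, r i * (F i - F (i + 1)) ≤ ∑ i, r i - c * (N - S * F 0)
  | 0, r, F, c, _, _, hF, _ => by simp [hF]
  | N + 1, r, F, c, hr, hc, hF, hSF => by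
    have ih := mul_sum_mul_sub_succ_le (r := r ∘ Fin.succ) (F := fun j => F (j + 1)) (c := r 0)
      (hr.comp (Fin.strictMono_succ.monotone)) (fun i => hr (Fin.zero_le _)) hF
      (fun i => by simpa [add_sub_add_right_eq_sub] using hSF i.succ)
    have h0 : c ≤ r 0 := hc 0
    have hF0 : S * F 0 ≤ N + 1 := by simpa using hSF 0
    simp only [Fin.sum_univ_succ, Fin.val_succ, Fin.val_zero, Function.comp_apply] at ih ⊢
    push_cast at ih ⊢
    nlinarith [mul_nonneg (sub_nonneg.2 h0) (sub_nonneg.2 hF0)]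

lemma mul_sum_mul_sub_succ_le_sum {S : ℝ} {N : ℕ} {r : Fin N → ℝ} {F : ℕ → ℝ}
    (hr : Monotone r) (hr₀ : ∀ i, 0 ≤ r i) (hF : F N = 0) (hSF : ∀ i : Fin N, S * F i ≤ N - i) :
    S * ∑ i, r i * (F i - F (i + 1)) ≤ ∑ i, r i := by
  simpa using mul_sum_mul_sub_succ_le hr hr₀ hF hSF

lemma sum_range_tsub_succ_of_antitone {g : ℕ → ℕ} (hg : Antitone g) (n : ℕ) :
    ∑ j ∈ range n, (g j - g (j + 1)) = g 0 - g n := by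
  induction n with
  | zero => simp
  | succ n ih =>
    rw [sum_range_succ, ih]
    have : g n ≤ g 0 := hg (Nat.zero_le n)
    have : g (n + 1) ≤ g n := hg (Nat.le_succ n)
    omega

section Greedy

variable [Fintype V] [DecidableEq V] [Fintype E] {edge : E → Finset V}
variable {N : ℕ} (σ : Fin N ≃ E)

def prefixEdges (j : ℕ) : Finset E := {e | (σ.symm e : ℕ) < j}

lemma prefixEdges_zero : prefixEdges σ 0 = ∅ := by
  ext; simp [prefixEdges]

lemma prefixEdges_of_le {j : ℕ} (hj : N ≤ j) : prefixEdges σ j = univ :=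
  eq_univ_of_forall fun e => mem_filter.2 ⟨mem_univ e, (σ.symm e).isLt.trans_le hj⟩

lemma prefixEdges_succ (i : Fin N) :
    prefixEdges σ (i + 1) = insert (σ i) (prefixEdges σ i) := by
  ext e
  simp only [prefixEdges, mem_filter, mem_univ, true_and, mem_insert, Nat.lt_succ_iff_lt_or_eq,
    Fin.val_inj, Equiv.symm_apply_eq]
  exact or_comm

lemma card_prefixEdges (i : Fin N) : #(prefixEdges σ i) = i := by
  have : prefixEdges σ i = (Iio i).map σ.toEmbedding := by
    ext e
    simp only [prefixEdges, mem_filter, mem_univ, true_and, mem_map_equiv, mem_Iio, Fin.lt_def]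
  rw [this, card_map, Fin.card_Iio]

variable (edge) in
noncomputable def greedyMult (e : E) : ℕ :=
  numComponents edge (prefixEdges σ (σ.symm e)) - numComponents edge (prefixEdges σ (σ.symm e + 1))

lemma greedyMult_apply (i : Fin N) : greedyMult edge σ (σ i) =
    numComponents edge (prefixEdges σ i) - numComponents edge (prefixEdges σ (i + 1)) := by
  simp [greedyMult]

lemma antitone_numComponents_prefixEdges_inter (G : Finset E) :
    Antitone fun j => numComponents edge (prefixEdges σ j ∩ G) := by
  refine antitone_nat_of_succ_le fun j => ?_
  rcases lt_or_ge j N with hj | hj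
  · have := prefixEdges_succ σ ⟨j, hj⟩
    simp only at this
    rw [this]
    by_cases hG : σ ⟨j, hj⟩ ∈ G
    · rw [insert_inter_of_mem hG]
      exact numComponents_insert_le _ _
    · rw [insert_inter_of_notMem hG]
  · rw [prefixEdges_of_le σ hj, prefixEdges_of_le σ (hj.trans j.le_succ)]

lemma greedyMult_le (G : Finset E) {i : Fin N} (hi : σ i ∈ G) :
    greedyMult edge σ (σ i) ≤ numComponents edge (prefixEdges σ i ∩ G) -
      numComponents edge (prefixEdges σ (i + 1) ∩ G) := by
  rw [greedyMult_apply, prefixEdges_succ, insert_inter_of_mem hi]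
  have := numComponents_submodular (edge := edge) (A := prefixEdges σ i)
    (B := prefixEdges σ i ∩ G) inter_subset_left (σ i)
  have := numComponents_insert_le (edge := edge) (prefixEdges σ i ∩ G) (σ i)
  omega

lemma sum_greedyMult_le (G : Finset E) :
    ∑ e ∈ G, greedyMult edge σ e ≤ Fintype.card V - numComponents edge G := by
  set D := fun j => numComponents edge (prefixEdges σ j ∩ G)
  calc ∑ e ∈ G, greedyMult edge σ e
      = ∑ i, if σ i ∈ G then greedyMult edge σ (σ i) else 0 := by
        rw [Equiv.sum_comp σ (fun e => if e ∈ G then greedyMult edge σ e else 0), sum_ite_mem,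
          univ_inter]
    _ ≤ ∑ i : Fin N, (D i - D (i + 1)) := by
        refine sum_le_sum fun i _ => ?_
        split_ifs with hi
        · exact greedyMult_le σ G hi
        · exact Nat.zero_le _
    _ = D 0 - D N := by
        rw [Fin.sum_univ_eq_sum_range (fun j => D j - D (j + 1)),
          sum_range_tsub_succ_of_antitone (antitone_numComponents_prefixEdges_inter σ G)]
    _ = Fintype.card V - numComponents edge G := by
        simp only [D, prefixEdges_zero, prefixEdges_of_le σ le_rfl, empty_inter, univ_inter,
          numComponents_empty]

lemma sum_greedyMult :
    ∑ e, greedyMult edge σ e = Fintype.card V - numComponents edge (univ : Finset E) := by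
  rw [← Equiv.sum_comp σ]
  simp only [greedyMult_apply]
  rw [Fin.sum_univ_eq_sum_range (fun j => numComponents edge (prefixEdges σ j) -
      numComponents edge (prefixEdges σ (j + 1))), sum_range_tsub_succ_of_antitone
      (by simpa using antitone_numComponents_prefixEdges_inter (edge := edge) σ univ),
    prefixEdges_zero, prefixEdges_of_le σ le_rfl, numComponents_empty]

lemma isMultiTree_greedyMult [Nonempty V] (hconn : HConnected edge) :
    IsMultiTree edge (greedyMult edge σ) := by
  refine ⟨by rw [sum_greedyMult, numComponents_univ hconn], fun X hX => ?_⟩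
  have := card_add_one_le_numComponents_edgesIn (edge := edge) hX
  have := sum_greedyMult_le (edge := edge) σ (edgesIn edge X)
  omega

lemma strength_mul_sum_greedyMult_le [Nonempty V] (hconn : HConnected edge) {ρ : E → ℝ}
    (hρ : ∀ e, 0 ≤ ρ e) (hσ : Monotone (ρ ∘ σ)) :
    strength edge * ∑ e, (greedyMult edge σ e : ℝ) * ρ e ≤ ∑ e, ρ e := by
  set F : ℕ → ℝ := fun j => (numComponents edge (prefixEdges σ j) : ℝ) - 1
  have hterm (i : Fin N) :
      (greedyMult edge σ (σ i) : ℝ) * ρ (σ i) = ρ (σ i) * (F i - F (i + 1)) := by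
    have hle := antitone_numComponents_prefixEdges_inter (edge := edge) σ univ (Nat.le_succ i)
    simp only [inter_univ] at hle
    rw [greedyMult_apply, Nat.cast_sub hle]
    ring
  have hcard : Fintype.card E = N := by rw [← Fintype.card_congr σ, Fintype.card_fin]
  rw [← Equiv.sum_comp σ, ← Equiv.sum_comp σ, Fintype.sum_congr _ _ hterm]
  refine mul_sum_mul_sub_succ_le_sum hσ (fun i => hρ _) ?_ fun i => ?_
  · simp [F, prefixEdges_of_le σ le_rfl, numComponents_univ hconn]
  · simpa [F, card_prefixEdges, hcard] using
      strength_mul_numComponents_sub_one_le (edge := edge) (prefixEdges σ i)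

end Greedy

section Modulus

variable [Fintype V] [DecidableEq V] [Fintype E] {edge : E → Finset V}

lemma exists_isMultiTree_strength_mul_le [Nonempty V] (hconn : HConnected edge) {ρ : E → ℝ}
    (hρ : ∀ e, 0 ≤ ρ e) :
    ∃ m, IsMultiTree edge m ∧ strength edge * ∑ e, (m e : ℝ) * ρ e ≤ ∑ e, ρ e := by
  let enum := Fintype.equivFin E
  let σ := (Tuple.sort (ρ ∘ enum.symm)).trans enum.symm
  exact ⟨greedyMult edge σ, isMultiTree_greedyMult σ hconn,
    strength_mul_sum_greedyMult_le σ hconn hρ (Tuple.monotone_sort (ρ ∘ enum.symm))⟩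

lemma exists_mem_parts_subset_of_notMem_hcut [Nonempty V] {P : Finpartition (univ : Finset V)}
    {e : E} (he : e ∉ hcut edge P) : ∃ p ∈ P.parts, edge e ⊆ p := by
  rcases (edge e).eq_empty_or_nonempty with h | ⟨v, hv⟩
  · obtain ⟨p, hp, -⟩ := P.exists_mem (mem_univ (Classical.arbitrary V))
    exact ⟨p, hp, h ▸ empty_subset p⟩
  · obtain ⟨p, hp, hvp⟩ := P.exists_mem (mem_univ v)
    refine ⟨p, hp, fun w hw => ?_⟩
    obtain ⟨q, hq, hwq⟩ := P.exists_mem (mem_univ w)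
    by_contra hwp
    exact he (mem_filter.2 ⟨mem_univ e, p, hp, q, hq, fun hpq => hwp (hpq ▸ hwq),
      ⟨v, mem_inter.2 ⟨hv, hvp⟩⟩, ⟨w, mem_inter.2 ⟨hw, hwq⟩⟩⟩)

lemma card_parts_sub_one_le_sum_hcut [Nonempty V] {m : E → ℕ} (hm : IsMultiTree edge m)
    (P : Finpartition (univ : Finset V)) : #P.parts - 1 ≤ ∑ e ∈ hcut edge P, m e := by
  have hcover : (hcut edge P)ᶜ ⊆ P.parts.sup (edgesIn edge) := fun e he => by
    obtain ⟨p, hp, hep⟩ := exists_mem_parts_subset_of_notMem_hcut (mem_compl.1 he)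
    exact mem_sup.2 ⟨p, hp, mem_filter.2 ⟨mem_univ e, hep⟩⟩
  have hunion (s t : Finset E) : ∑ e ∈ s ∪ t, m e ≤ ∑ e ∈ s, m e + ∑ e ∈ t, m e :=
    sum_union_inter (f := m) ▸ le_self_add
  have hinside : ∑ e ∈ (hcut edge P)ᶜ, m e ≤ ∑ p ∈ P.parts, ∑ e ∈ edgesIn edge p, m e :=
    (sum_le_sum_of_subset hcover).trans
      (apply_sup_le_sum (f := fun s => ∑ e ∈ s, m e) sum_empty (hunion _ _) _)
  have hparts : ∑ p ∈ P.parts, ∑ e ∈ edgesIn edge p, m e + #P.parts ≤ Fintype.card V := by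
    rw [← card_univ, ← P.sum_card_parts, card_eq_sum_ones, ← sum_add_distrib]
    refine sum_le_sum fun p hp => ?_
    have := hm.2 p (P.nonempty_of_mem_parts hp)
    have := card_pos.2 (P.nonempty_of_mem_parts hp)
    omega
  have htotal := sum_compl_add_sum (hcut edge P) m
  rw [hm.1] at htotal
  omega

lemma mod1_le_hcut_ratio [Nonempty V] (P : Finpartition (univ : Finset V)) (hP : 2 ≤ #P.parts) :
    Mod1 (fun _ => (1 : ℝ)) (OmegaSet edge) ≤ (#(hcut edge P) : ℝ) / (#P.parts - 1) := by
  set k : ℝ := #P.parts - 1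
  have hk : 0 < k := by
    have : (2 : ℝ) ≤ #P.parts := by exact_mod_cast hP
    linarith
  set ρ : E → ℝ := fun e => if e ∈ hcut edge P then k⁻¹ else 0
  have hρ (x : E → ℝ) : ∑ e, x e * ρ e = (∑ e ∈ hcut edge P, x e) * k⁻¹ := by
    simp only [ρ, mul_ite, mul_zero, sum_ite_mem, univ_inter, sum_mul]
  have hadm : ρ ∈ AdmSet (OmegaSet edge) := by
    refine ⟨fun e => by positivity, ?_⟩
    rintro _ ⟨m, hm, rfl⟩
    have hcut_ge : k ≤ ∑ e ∈ hcut edge P, (m e : ℝ) := by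
      have := card_parts_sub_one_le_sum_hcut hm P
      have : ((#P.parts - 1 : ℕ) : ℝ) ≤ ∑ e ∈ hcut edge P, (m e : ℝ) := by exact_mod_cast this
      rwa [Nat.cast_sub (by omega), Nat.cast_one] at this
    rw [hρ, ← mul_inv_cancel₀ hk.ne']
    exact mul_le_mul_of_nonneg_right hcut_ge (inv_nonneg.2 hk.le)
  refine csInf_le ⟨0, ?_⟩ ⟨ρ, hadm, ?_⟩
  · rintro _ ⟨ρ', hρ', rfl⟩
    exact sum_nonneg fun e _ => by simpa using hρ'.1 e
  · simpa [div_eq_mul_inv] using (hρ fun _ => 1).symm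

lemma mod1_le_strength (hV : 2 ≤ Fintype.card V) :
    Mod1 (fun _ => (1 : ℝ)) (OmegaSet edge) ≤ strength edge := by
  have : Nonempty V := Fintype.card_pos_iff.1 (by omega)
  refine le_csInf ⟨_, ⊥, by rwa [Finpartition.card_bot, card_univ], rfl⟩ ?_
  rintro _ ⟨P, hP, rfl⟩
  exact mod1_le_hcut_ratio P hP

lemma strength_le_mod1 (hconn : HConnected edge) (hV : 2 ≤ Fintype.card V) :
    strength edge ≤ Mod1 (fun _ => (1 : ℝ)) (OmegaSet edge) := by
  have : Nonempty V := Fintype.card_pos_iff.1 (by omega)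
  have hone : (fun _ => (1 : ℝ)) ∈ AdmSet (OmegaSet edge) := by
    refine ⟨fun _ => zero_le_one, ?_⟩
    rintro _ ⟨m, hm, rfl⟩
    have : (1 : ℝ) ≤ ((∑ e, m e : ℕ) : ℝ) := by rw [hm.1]; exact_mod_cast (by omega)
    simpa using this
  refine le_csInf ⟨_, _, hone, rfl⟩ ?_
  rintro _ ⟨ρ, hρ, rfl⟩
  obtain ⟨m, hm, hcost⟩ := exists_isMultiTree_strength_mul_le hconn hρ.1
  calc strength edge ≤ strength edge * ∑ e, (m e : ℝ) * ρ e :=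
        le_mul_of_one_le_right strength_nonneg (hρ.2 _ ⟨m, hm, rfl⟩)
    _ ≤ ∑ e, ρ e := hcost
    _ = ∑ e, 1 * ρ e := by simp

lemma strength_eq_zero_of_card_le_one (h : Fintype.card V ≤ 1) : strength edge = 0 := by
  refine (congrArg sInf (Set.eq_empty_of_forall_notMem ?_)).trans Real.sInf_empty
  rintro _ ⟨P, hP, -⟩
  have := P.card_parts_le_card
  rw [card_univ] at this
  omega

lemma mod1_eq_zero_of_card_le_one (h : Fintype.card V ≤ 1) :
    Mod1 (fun _ => (1 : ℝ)) (OmegaSet edge) = 0 := by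
  refine (congrArg sInf (Set.eq_empty_of_forall_notMem ?_)).trans Real.sInf_empty
  rintro _ ⟨ρ, hρ, -⟩
  have hzero : (fun _ => ((0 : ℕ) : ℝ)) ∈ OmegaSet edge :=
    ⟨fun _ => 0, ⟨by rw [sum_const_zero]; omega, fun _ _ => by simp⟩, rfl⟩
  have := hρ.2 _ hzero
  norm_num at this

lemma mod1_omegaSet_eq_strength (hconn : HConnected edge) :
    Mod1 (fun _ => (1 : ℝ)) (OmegaSet edge) = strength edge := by
  rcases le_or_gt (Fintype.card V) 1 with h | h
  · rw [mod1_eq_zero_of_card_le_one h, strength_eq_zero_of_card_le_one h]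
  · exact le_antisymm (mod1_le_strength h) (strength_le_mod1 hconn h)

end Modulus

end HypergraphModulus

theorem stmt17_general {V E : Type*} [Fintype V] [DecidableEq V] [Fintype E]
    (edge : E → Finset V) (hconn : HConnected edge) :
    strength (fun p : E × Fin (Fintype.card V) => edge p.1) =
      (Fintype.card V : ℝ) * strength edge ∧
    Mod1 (fun _ => (1 : ℝ)) (OmegaSet edge) = strength edge :=
  ⟨HypergraphModulus.strength_parallel edge _, HypergraphModulus.mod1_omegaSet_eq_strength hconn⟩

/-- For a connected hypergraph `H` and `t = |V|`,
`S(H^t) = t·S(H)` and `Mod_1(Ω(H)) = S(H)`. -/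
theorem stmt17 {V E : Type*} [Fintype V] [DecidableEq V] [Fintype E] [DecidableEq E]
    (edge : E → Finset V) (hconn : HConnected edge) :
    strength (fun p : E × Fin (Fintype.card V) => edge p.1) =
      (Fintype.card V : ℝ) * strength edge ∧
    Mod1 (fun _ => (1 : ℝ)) (OmegaSet edge) = strength edge :=
  stmt17_general edge hconn
end

section
/- Let H = (V,E) be a loopless hypergraph with at least two vertices. Then S(H) = min{ θ(H/F) : F ⊆ E, |V(H/F)| ≥ 2 } and D(H) = max{ θ_H(F) : F ⊆ E, |V(H[F])| ≥ 2 }, where θ_H(F) = |F|/(|V(H[F])|-1) and θ(H) = |E|/(|V|-1). -/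
open Finset
open scoped Classical

/-- Vertices `u, v` are identified after contracting all hyperedges in `F`. -/
def contractRel {V E : Type*} (edge : E → Finset V) (F : Finset E) : V → V → Prop :=
  Relation.EqvGen fun u v => ∃ f ∈ F, u ∈ edge f ∧ v ∈ edge f

/-- The number of vertices of the contracted hypergraph `H/F`. -/
noncomputable def contractVertexCount {V E : Type*} [Fintype V] (edge : E → Finset V) (F : Finset E) : ℕ :=
  (univ.image fun v => Quot.mk (contractRel edge F) v).card

/-- The number of hyperedges of the contracted hypergraph `H/F` (loops are discarded). -/
noncomputable def contractEdgeCount {V E : Type*} [Fintype V] [Fintype E] (edge : E → Finset V)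
    (F : Finset E) : ℕ :=
  (univ.filter fun e : E => ∃ u ∈ edge e, ∃ v ∈ edge e, ¬ contractRel edge F u v).card

section AuxStmt18

open Finset
open scoped Classical

variable {V E : Type*}

private lemma aux_card_image_congr {α β γ : Type*} [Fintype α] [DecidableEq β] [DecidableEq γ]
    (f : α → β) (g : α → γ) (h : ∀ a b, f a = f b ↔ g a = g b) :
    (univ.image f).card = (univ.image g).card := by
  classical
  apply Finset.card_bij (fun x hx => g ((Finset.mem_image.1 hx).choose))
  · intro x hx
    exact Finset.mem_image_of_mem g (Finset.mem_univ _)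
  · intro x hx y hy hxy
    have hx' := (Finset.mem_image.1 hx).choose_spec
    have hy' := (Finset.mem_image.1 hy).choose_spec
    rw [← hx'.2, ← hy'.2]
    exact (h _ _).2 hxy
  · intro z hz
    obtain ⟨a, -, rfl⟩ := Finset.mem_image.1 hz
    refine ⟨f a, Finset.mem_image_of_mem f (Finset.mem_univ _), ?_⟩
    have := (Finset.mem_image.1 (Finset.mem_image_of_mem f (Finset.mem_univ a))).choose_spec
    exact (h _ _).1 this.2

private lemma contractRel_equiv (edge : E → Finset V) (F : Finset E) :
    Equivalence (contractRel edge F) :=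
  Relation.EqvGen.is_equivalence _

private lemma quot_mk_contract_eq_iff (edge : E → Finset V) (F : Finset E) {u v : V} :
    Quot.mk (contractRel edge F) u = Quot.mk (contractRel edge F) v ↔
      contractRel edge F u v :=
  ⟨fun h => (contractRel_equiv edge F).eqvGen_iff.1 (Quot.eqvGen_exact h), Quot.sound⟩

/-- The setoid of the contraction. -/
private def contractSetoid (edge : E → Finset V) (F : Finset E) : Setoid V :=
  ⟨contractRel edge F, contractRel_equiv edge F⟩

/-- The partition of `V` into the vertex classes of `H/F`. -/
private noncomputable def contractPartition [Fintype V] [DecidableEq V]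
    (edge : E → Finset V) (F : Finset E) : Finpartition (univ : Finset V) :=
  Finpartition.ofSetoid (contractSetoid edge F)

private lemma contractPartition_parts (edge : E → Finset V) [Fintype V] [DecidableEq V]
    (F : Finset E) :
    (contractPartition edge F).parts
      = univ.image fun a => ({b | contractRel edge F a b} : Finset V) := rfl

private lemma class_eq_iff (edge : E → Finset V) [Fintype V] [DecidableEq V] (F : Finset E)
    (a b : V) :
    ({x | contractRel edge F a x} : Finset V) = ({x | contractRel edge F b x} : Finset V)
      ↔ contractRel edge F a b := by
  have hE := contractRel_equiv edge F
  constructor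
  · intro hset
    have hb : b ∈ ({x | contractRel edge F b x} : Finset V) := by
      simp only [Finset.mem_filter, Finset.mem_univ, true_and]
      exact hE.refl b
    rw [← hset] at hb
    simpa only [Finset.mem_filter, Finset.mem_univ, true_and] using hb
  · intro hab
    ext x
    simp only [Finset.mem_filter, Finset.mem_univ, true_and]
    exact ⟨fun h => hE.trans (hE.symm hab) h, fun h => hE.trans hab h⟩

private lemma contractPartition_parts_card (edge : E → Finset V) [Fintype V] [DecidableEq V]
    (F : Finset E) :
    (contractPartition edge F).parts.card = contractVertexCount edge F := by
  rw [contractPartition_parts]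
  exact aux_card_image_congr _ _ fun a b => by
    rw [class_eq_iff, quot_mk_contract_eq_iff]

private lemma hcut_contractPartition (edge : E → Finset V) [Fintype V] [DecidableEq V]
    [Fintype E] (F : Finset E) :
    hcut edge (contractPartition edge F)
      = univ.filter fun e => ∃ u ∈ edge e, ∃ v ∈ edge e, ¬ contractRel edge F u v := by
  have hE := contractRel_equiv edge F
  ext e
  simp only [hcut, Finset.mem_filter, Finset.mem_univ, true_and, contractPartition_parts,
    Finset.mem_image]
  constructor
  · rintro ⟨p, ⟨a, -, rfl⟩, q, ⟨b, -, rfl⟩, hpq, ⟨u, hu⟩, ⟨v, hv⟩⟩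
    rw [Finset.mem_inter] at hu hv
    have hau : contractRel edge F a u := by
      have := hu.2; simpa only [Finset.mem_filter, Finset.mem_univ, true_and] using this
    have hbv : contractRel edge F b v := by
      have := hv.2; simpa only [Finset.mem_filter, Finset.mem_univ, true_and] using this
    refine ⟨u, hu.1, v, hv.1, fun huv => hpq ?_⟩
    exact (class_eq_iff edge F a b).2 (hE.trans hau (hE.trans huv (hE.symm hbv)))
  · rintro ⟨u, hu, v, hv, huv⟩
    refine ⟨_, ⟨u, rfl⟩, _, ⟨v, rfl⟩,
      fun h => huv ((class_eq_iff edge F u v).1 h), ⟨u, ?_⟩, ⟨v, ?_⟩⟩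
    · rw [Finset.mem_inter]
      refine ⟨hu, ?_⟩
      simp only [Finset.mem_filter, Finset.mem_univ, true_and]
      exact hE.refl u
    · rw [Finset.mem_inter]
      refine ⟨hv, ?_⟩
      simp only [Finset.mem_filter, Finset.mem_univ, true_and]
      exact hE.refl v

private lemma hcut_card_contractPartition (edge : E → Finset V) [Fintype V] [DecidableEq V]
    [Fintype E] (F : Finset E) :
    (hcut edge (contractPartition edge F)).card = contractEdgeCount edge F := by
  rw [hcut_contractPartition]
  rfl

private lemma contractRel_empty (edge : E → Finset V) {u v : V}
    (h : contractRel edge (∅ : Finset E) u v) : u = v := by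
  induction h with
  | rel a b h => exact absurd h.choose_spec.1 (Finset.notMem_empty _)
  | refl => rfl
  | symm a b _ ih => exact ih.symm
  | trans a b c _ _ ih1 ih2 => exact ih1.trans ih2

private lemma contractVertexCount_empty (edge : E → Finset V) [Fintype V] :
    contractVertexCount edge (∅ : Finset E) = Fintype.card V := by
  classical
  rw [contractVertexCount, Finset.card_image_of_injective _ ?_, Finset.card_univ]
  intro u v h
  exact contractRel_empty edge ((quot_mk_contract_eq_iff edge ∅).1 h)

/-- Edges inside a part of `P`. -/
private noncomputable def insideEdges [Fintype V] [DecidableEq V] [Fintype E]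
    (edge : E → Finset V) (P : Finpartition (univ : Finset V)) : Finset E :=
  univ.filter fun e => ∃ p ∈ P.parts, edge e ⊆ p

private lemma inside_rel_samePart [Fintype V] [DecidableEq V] [Fintype E]
    (edge : E → Finset V) (P : Finpartition (univ : Finset V)) {u v : V}
    (h : contractRel edge (insideEdges edge P) u v) :
    ∀ p ∈ P.parts, (u ∈ p ↔ v ∈ p) := by
  induction h with
  | rel a b h =>
    obtain ⟨f, hf, ha, hb⟩ := h
    obtain ⟨p0, hp0, hsub⟩ := (Finset.mem_filter.1 hf).2
    intro p hp
    constructor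
    · intro hap
      have : p = p0 := P.eq_of_mem_parts hp hp0 hap (hsub ha)
      exact this ▸ hsub hb
    · intro hbp
      have : p = p0 := P.eq_of_mem_parts hp hp0 hbp (hsub hb)
      exact this ▸ hsub ha
  | refl => intro p hp; exact Iff.rfl
  | symm a b _ ih => intro p hp; exact (ih p hp).symm
  | trans a b c _ _ ih1 ih2 => intro p hp; exact (ih1 p hp).trans (ih2 p hp)

private lemma parts_card_le_cvc [Fintype V] [Nonempty V] [DecidableEq V] [Fintype E]
    (edge : E → Finset V) (P : Finpartition (univ : Finset V)) :
    P.parts.card ≤ contractVertexCount edge (insideEdges edge P) := by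
  classical
  set F := insideEdges edge P with hF
  rw [contractVertexCount]
  apply Finset.card_le_card_of_injOn
    (fun p => Quot.mk (contractRel edge F)
      (if h : p.Nonempty then h.choose else Classical.arbitrary V))
  · intro p hp
    have hne := P.nonempty_of_mem_parts hp
    simp only [dif_pos hne]
    exact Finset.mem_image_of_mem _ (Finset.mem_univ _)
  · intro p hp q hq heq
    have hp' : p ∈ P.parts := hp
    have hq' : q ∈ P.parts := hq
    have hnp := P.nonempty_of_mem_parts hp'
    have hnq := P.nonempty_of_mem_parts hq'
    simp only [dif_pos hnp, dif_pos hnq] at heq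
    have hr := (quot_mk_contract_eq_iff edge F).1 heq
    have hsame := inside_rel_samePart edge P hr
    have hyp : hnq.choose ∈ p := (hsame p hp').1 hnp.choose_spec
    exact P.eq_of_mem_parts hp' hq' hyp hnq.choose_spec

private lemma contractEdges_subset_hcut [Fintype V] [DecidableEq V] [Fintype E]
    (edge : E → Finset V) (P : Finpartition (univ : Finset V)) :
    (univ.filter fun e => ∃ u ∈ edge e, ∃ v ∈ edge e,
        ¬ contractRel edge (insideEdges edge P) u v) ⊆ hcut edge P := by
  intro e he
  obtain ⟨u, hu, v, hv, huv⟩ := (Finset.mem_filter.1 he).2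
  by_contra hne
  apply huv
  obtain ⟨p, hp, hup⟩ := P.exists_mem (Finset.mem_univ u)
  have hsub : edge e ⊆ p := by
    intro w hw
    obtain ⟨q, hq, hwq⟩ := P.exists_mem (Finset.mem_univ w)
    have : p = q := by
      by_contra hpq
      exact hne (Finset.mem_filter.2 ⟨Finset.mem_univ e, p, hp, q, hq, hpq,
        ⟨u, Finset.mem_inter.2 ⟨hu, hup⟩⟩, ⟨w, Finset.mem_inter.2 ⟨hw, hwq⟩⟩⟩)
    exact this ▸ hwq
  have heF : e ∈ insideEdges edge P :=
    Finset.mem_filter.2 ⟨Finset.mem_univ e, p, hp, hsub⟩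
  exact Relation.EqvGen.rel u v ⟨e, heF, hu, hv⟩

end AuxStmt18

/-- For a loopless hypergraph with at least two vertices,
`S(H) = min θ(H/F)` over contractions with at least two vertices, and
`D(H) = max θ_H(F)` over sub-edge-sets spanning at least two vertices. -/
theorem stmt18 {V E : Type*} [Fintype V] [DecidableEq V] [Fintype E] [DecidableEq E]
    (edge : E → Finset V) (hV : 2 ≤ Fintype.card V)
    (hloopless : ∀ e, 2 ≤ (edge e).card) :
    strength edge =
      sInf { r : ℝ | ∃ F : Finset E, 2 ≤ contractVertexCount edge F ∧
        r = (contractEdgeCount edge F : ℝ) / ((contractVertexCount edge F : ℝ) - 1) } ∧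
    arboricity edge =
      sSup { r : ℝ | ∃ F : Finset E, 2 ≤ (F.biUnion edge).card ∧
        r = (F.card : ℝ) / (((F.biUnion edge).card : ℝ) - 1) } := by
  have hNeV : Nonempty V := Fintype.card_pos_iff.1 (by omega)
  constructor
  · set A := { r : ℝ | ∃ P : Finpartition (univ : Finset V), 2 ≤ P.parts.card ∧
        r = ((hcut edge P).card : ℝ) / ((P.parts.card : ℝ) - 1) } with hA
    set B := { r : ℝ | ∃ F : Finset E, 2 ≤ contractVertexCount edge F ∧
        r = (contractEdgeCount edge F : ℝ) / ((contractVertexCount edge F : ℝ) - 1) } with hB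
    have hBsubA : B ⊆ A := by
      rintro r ⟨F, hF, rfl⟩
      exact ⟨contractPartition edge F, by rw [contractPartition_parts_card]; exact hF,
        by rw [hcut_card_contractPartition, contractPartition_parts_card]⟩
    have hstep : ∀ a ∈ A, ∃ b ∈ B, b ≤ a := by
      rintro a ⟨P, hP, rfl⟩
      have hcvc2 : 2 ≤ contractVertexCount edge (insideEdges edge P) :=
        le_trans hP (parts_card_le_cvc edge P)
      refine ⟨_, ⟨insideEdges edge P, hcvc2, rfl⟩, ?_⟩
      have hcE : (contractEdgeCount edge (insideEdges edge P) : ℝ)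
          ≤ ((hcut edge P).card : ℝ) := by
        exact_mod_cast Finset.card_le_card (contractEdges_subset_hcut edge P)
      have hpc2 : (2:ℝ) ≤ (P.parts.card : ℝ) := by exact_mod_cast hP
      have hle : (P.parts.card : ℝ)
          ≤ (contractVertexCount edge (insideEdges edge P) : ℝ) := by
        exact_mod_cast parts_card_le_cvc edge P
      exact div_le_div₀ (Nat.cast_nonneg _) hcE (by linarith) (by linarith)
    have hBne : B.Nonempty :=
      ⟨_, ⟨∅, by rw [contractVertexCount_empty]; exact hV, rfl⟩⟩
    have hAne : A.Nonempty := ⟨_, hBsubA hBne.choose_spec⟩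
    have nonnegA : ∀ a ∈ A, (0:ℝ) ≤ a := by
      rintro a ⟨P, hP, rfl⟩
      have : (2:ℝ) ≤ (P.parts.card : ℝ) := by exact_mod_cast hP
      exact div_nonneg (Nat.cast_nonneg _) (by linarith)
    have nonnegB : ∀ b ∈ B, (0:ℝ) ≤ b := fun b hb => nonnegA b (hBsubA hb)
    have hAbdd : BddBelow A := ⟨0, fun a ha => nonnegA a ha⟩
    have hBbdd : BddBelow B := ⟨0, fun b hb => nonnegB b hb⟩
    show sInf A = sInf B
    refine le_antisymm (csInf_le_csInf hAbdd hBne hBsubA) (le_csInf hAne fun a ha => ?_)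
    obtain ⟨b, hb, hba⟩ := hstep a ha
    exact (csInf_le hBbdd hb).trans hba
  · set A := { r : ℝ | ∃ X : Finset V, 2 ≤ X.card ∧
        r = ((edgesIn edge X).card : ℝ) / ((X.card : ℝ) - 1) } with hA
    set B := { r : ℝ | ∃ F : Finset E, 2 ≤ (F.biUnion edge).card ∧
        r = (F.card : ℝ) / (((F.biUnion edge).card : ℝ) - 1) } with hB
    have bound : ∀ (n k : ℕ), 2 ≤ k → n ≤ Fintype.card E →
        (n:ℝ)/((k:ℝ)-1) ≤ (Fintype.card E : ℝ) := by
      intro n k hk hn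
      have hk' : (2:ℝ) ≤ (k:ℝ) := by exact_mod_cast hk
      have h1 : (n:ℝ)/((k:ℝ)-1) ≤ (n:ℝ) := div_le_self (Nat.cast_nonneg _) (by linarith)
      exact h1.trans (by exact_mod_cast hn)
    have hAbdd : BddAbove A := by
      refine ⟨(Fintype.card E : ℝ), ?_⟩
      rintro a ⟨X, hX, rfl⟩
      exact bound _ _ hX (le_trans (Finset.card_le_univ _) (le_of_eq (Finset.card_univ)))
    have hBbdd : BddAbove B := by
      refine ⟨(Fintype.card E : ℝ), ?_⟩
      rintro b ⟨F, hF, rfl⟩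
      exact bound _ _ hF (le_trans (Finset.card_le_univ _) (le_of_eq (Finset.card_univ)))
    have hAne : A.Nonempty := ⟨_, ⟨univ, by rw [Finset.card_univ]; exact hV, rfl⟩⟩
    have nonnegA : ∀ a ∈ A, (0:ℝ) ≤ a := by
      rintro a ⟨X, hX, rfl⟩
      have : (2:ℝ) ≤ (X.card : ℝ) := by exact_mod_cast hX
      exact div_nonneg (Nat.cast_nonneg _) (by linarith)
    have nonnegB : ∀ b ∈ B, (0:ℝ) ≤ b := by
      rintro b ⟨F, hF, rfl⟩
      have : (2:ℝ) ≤ ((F.biUnion edge).card : ℝ) := by exact_mod_cast hF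
      exact div_nonneg (Nat.cast_nonneg _) (by linarith)
    have h1 : ∀ a ∈ A, a ≤ sSup B := by
      rintro a ⟨X, hX, rfl⟩
      by_cases h : (edgesIn edge X).Nonempty
      · obtain ⟨e, he⟩ := h
        set F := edgesIn edge X with hF
        have hFsub : F.biUnion edge ⊆ X := by
          intro v hv
          obtain ⟨f, hf, hvf⟩ := Finset.mem_biUnion.1 hv
          exact (Finset.mem_filter.1 hf).2 hvf
        have hbu2 : 2 ≤ (F.biUnion edge).card :=
          le_trans (hloopless e) (Finset.card_le_card (Finset.subset_biUnion_of_mem edge he))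
        have hb : ((F.card:ℝ)/(((F.biUnion edge).card:ℝ)-1)) ∈ B := ⟨F, hbu2, rfl⟩
        refine le_trans ?_ (le_csSup hBbdd hb)
        have hbu2' : (2:ℝ) ≤ ((F.biUnion edge).card:ℝ) := by exact_mod_cast hbu2
        have hXbu : ((F.biUnion edge).card:ℝ) ≤ (X.card:ℝ) := by
          exact_mod_cast Finset.card_le_card hFsub
        exact div_le_div₀ (Nat.cast_nonneg _) le_rfl (by linarith) (by linarith)
      · rw [Finset.not_nonempty_iff_eq_empty] at h
        rw [h]
        simpa using Real.sSup_nonneg nonnegB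
    have h2 : ∀ b ∈ B, b ≤ sSup A := by
      rintro b ⟨F, hF, rfl⟩
      have hsub : F ⊆ edgesIn edge (F.biUnion edge) := fun e he =>
        Finset.mem_filter.2 ⟨Finset.mem_univ e, Finset.subset_biUnion_of_mem edge he⟩
      have ha : (((edgesIn edge (F.biUnion edge)).card:ℝ)/(((F.biUnion edge).card:ℝ)-1)) ∈ A :=
        ⟨F.biUnion edge, hF, rfl⟩
      refine le_trans ?_ (le_csSup hAbdd ha)
      have h2' : (2:ℝ) ≤ ((F.biUnion edge).card : ℝ) := by exact_mod_cast hF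
      exact div_le_div₀ (Nat.cast_nonneg _)
        (by exact_mod_cast Finset.card_le_card hsub) (by linarith) le_rfl
    show sSup A = sSup B
    exact le_antisymm (csSup_le hAne h1) (Real.sSup_le h2 (Real.sSup_nonneg nonnegA))
end

section
/- Let M be the hypergraphic matroid of a hypergraph H = (V,E) with rank function r, let H₁ = (V₁, C₁) be a connected subhypergraph of H with r(C₁) < |V₁| - 1, and let J = {J₁,…,J_l} be a feasible partition of V₁ achieving r(C₁) = |V₁| - |J| + |δ_{H₁}(J)|. Then r(C₁) - r(C₁ ∖ δ_{H₁}(J)) ≥ |J| - |V₁| + r(C₁) = |δ_{H₁}(J)|, and |J| ≥ 2 with δ_{H₁}(J) nonempty. -/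
open Finset
open scoped Classical

/-- Connectivity of the subhypergraph `(W, {e ∈ C : e ⊆ W})`. -/
def ConnectedInSub {V E : Type*} (edge : E → Finset V) (C : Finset E) (W : Finset V) : Prop :=
  ∀ X ⊆ W, X.Nonempty → X ≠ W →
    ∃ e ∈ C, edge e ⊆ W ∧ (edge e ∩ X).Nonempty ∧ ((edge e ∩ W) \ X).Nonempty

/-- The hyperedges of `C` meeting at least two parts of the partition `J` (of a vertex
subset): `δ_C(J)`. -/
def cutSub {V E : Type*} [DecidableEq V] (edge : E → Finset V) (C : Finset E)
    {s : Finset V} (J : Finpartition s) : Finset E :=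
  C.filter fun e => ∃ p ∈ J.parts, ∃ q ∈ J.parts,
    p ≠ q ∧ (edge e ∩ p).Nonempty ∧ (edge e ∩ q).Nonempty


/-! If `|J| ≤ 1` the cut is empty and `r(C₁) = |V₁| - |J| ≥ |V₁| - 1`, so `|J| ≥ 2`; a part of `J`
is then a nonempty proper subset of `V₁`, and an edge of the connected `H₁` crossing it lies in
`δ_{H₁}(J)`. For the rank drop, complete `J` by singletons to a partition of `V`: no edge of
`C₁ ∖ δ_{H₁}(J)` crosses it, so the rank formula gives `r(C₁ ∖ δ_{H₁}(J)) ≤ |V₁| - |J|`. -/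

namespace Finpartition

variable {α : Type*} [DecidableEq α]

section DistribLattice

variable [DistribLattice α] [OrderBot α] {a b : α}

def disjUnion (P : Finpartition a) (Q : Finpartition b) (hab : Disjoint a b) :
    Finpartition (a ⊔ b) where
  parts := P.parts ∪ Q.parts
  supIndep := by
    rw [Finset.supIndep_iff_pairwiseDisjoint, coe_union, Set.pairwiseDisjoint_union]
    exact ⟨P.disjoint, Q.disjoint, fun p hp q hq _ ↦ hab.mono (P.le hp) (Q.le hq)⟩
  sup_parts := by rw [sup_union, P.sup_parts, Q.sup_parts]
  bot_notMem h := (mem_union.1 h).elim P.bot_notMem Q.bot_notMem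

@[simp]
theorem parts_disjUnion (P : Finpartition a) (Q : Finpartition b) (hab : Disjoint a b) :
    (P.disjUnion Q hab).parts = P.parts ∪ Q.parts :=
  rfl

theorem card_parts_disjUnion (P : Finpartition a) (Q : Finpartition b) (hab : Disjoint a b) :
    #(P.disjUnion Q hab).parts = #P.parts + #Q.parts :=
  card_union_of_disjoint <| disjoint_left.2 fun _ hp hq ↦
    P.ne_bot hp <| disjoint_self.1 <| hab.mono (P.le hp) (Q.le hq)

end DistribLattice

variable {s t : Finset α}

def extendDiscrete (P : Finpartition s) (hst : s ⊆ t) : Finpartition t :=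
  (P.disjUnion ⊥ disjoint_sdiff).copy (union_sdiff_of_subset hst)

theorem mem_parts_extendDiscrete {P : Finpartition s} {hst : s ⊆ t} {p : Finset α} :
    p ∈ (P.extendDiscrete hst).parts ↔ p ∈ P.parts ∨ ∃ v ∈ t \ s, {v} = p := by
  simp [extendDiscrete]

theorem card_parts_extendDiscrete (P : Finpartition s) (hst : s ⊆ t) :
    #(P.extendDiscrete hst).parts = #P.parts + #(t \ s) := by
  rw [extendDiscrete, copy_parts, card_parts_disjUnion, card_bot]

end Finpartition

section Hypergraph

variable {V E : Type*} [DecidableEq V] (edge : E → Finset V) {s : Finset V}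

theorem cutSub_eq_empty_of_card_parts_le_one (C : Finset E) (J : Finpartition s)
    (hJ : #J.parts ≤ 1) : cutSub edge C J = ∅ :=
  filter_false_of_mem fun _ _ ⟨_, hp, _, hq, hpq, _⟩ ↦ hpq (card_le_one.1 hJ _ hp _ hq)

theorem cutSub_sdiff_cutSub [DecidableEq E] (C : Finset E) (J : Finpartition s) :
    cutSub edge (C \ cutSub edge C J) J = ∅ := by
  ext e
  simp only [cutSub, mem_filter, mem_sdiff, notMem_empty, iff_false]
  rintro ⟨⟨heC, hnot⟩, hcross⟩
  exact hnot ⟨heC, hcross⟩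

theorem cutSub_nonempty {C : Finset E} (hconn : ConnectedInSub edge C s) (J : Finpartition s)
    (hJ : 2 ≤ #J.parts) : (cutSub edge C J).Nonempty := by
  obtain ⟨p, hp, q, hq, hpq⟩ := one_lt_card.1 hJ
  have hps : p ≠ s := by
    rintro rfl
    obtain ⟨v, hv⟩ := J.nonempty_of_mem_parts hq
    exact disjoint_left.1 (J.disjoint hq hp hpq.symm) hv (J.le hq hv)
  obtain ⟨e, heC, -, ⟨u, hu⟩, ⟨v, hv⟩⟩ := hconn p (J.le hp) (J.nonempty_of_mem_parts hp) hps
  simp only [mem_sdiff, mem_inter] at hu hv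
  obtain ⟨r, hr, hvr⟩ := J.exists_mem hv.1.2
  exact ⟨e, mem_filter.2 ⟨heC, p, hp, r, hr, by rintro rfl; exact hv.2 hvr,
    ⟨u, mem_inter.2 hu⟩, ⟨v, mem_inter.2 ⟨hv.1.1, hvr⟩⟩⟩⟩

theorem hrank_le_of_finpartition [Fintype V] [Fintype E] [DecidableEq E] (J : Finpartition s)
    {F : Finset E} (hF : ∀ e ∈ F, edge e ⊆ s) :
    hrank edge F ≤ #s - #J.parts + #(cutSub edge F J) := by
  set P := J.extendDiscrete (subset_univ s)
  have hcard : #P.parts = #J.parts + (Fintype.card V - #s) := by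
    rw [Finpartition.card_parts_extendDiscrete, card_univ_sdiff]
  have hcut_sub : hcut edge P ∩ F ⊆ cutSub edge F J := by
    intro e he
    obtain ⟨he, heF⟩ := mem_inter.1 he
    obtain ⟨-, p, hp, q, hq, hpq, hep, heq⟩ := mem_filter.1 he
    have hmet : ∀ r ∈ P.parts, (edge e ∩ r).Nonempty → r ∈ J.parts := by
      rintro r hr ⟨w, hw⟩
      refine (Finpartition.mem_parts_extendDiscrete.1 hr).resolve_right ?_
      rintro ⟨v, hv, rfl⟩
      obtain ⟨hwe, hwv⟩ := mem_inter.1 hw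
      exact (mem_sdiff.1 hv).2 (mem_singleton.1 hwv ▸ hF e heF hwe)
    exact mem_filter.2 ⟨heF, p, hmet p hp hep, q, hmet q hq heq, hpq, hep, heq⟩
  have hle : hrank edge F ≤ Fintype.card V - #P.parts + #(hcut edge P ∩ F) :=
    Nat.sInf_le ⟨P, rfl⟩
  have hcut_card := card_le_card hcut_sub
  have hJs := J.card_parts_le_card
  have hsV := card_le_univ s
  omega

end Hypergraph

theorem stmt19_general {V E : Type*} [Fintype V] [DecidableEq V] [Fintype E] [DecidableEq E]
    (edge : E → Finset V) (V₁ : Finset V) (C₁ : Finset E)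
    (hsub : ∀ e ∈ C₁, edge e ⊆ V₁)
    (hconn : ConnectedInSub edge C₁ V₁)
    (hrk : hrank edge C₁ < V₁.card - 1)
    (J : Finpartition V₁)
    (hach : (hrank edge C₁ : ℤ) = (V₁.card : ℤ) - J.parts.card + (cutSub edge C₁ J).card) :
    2 ≤ J.parts.card ∧
    (cutSub edge C₁ J).Nonempty ∧
    ((cutSub edge C₁ J).card : ℤ) = (J.parts.card : ℤ) - V₁.card + hrank edge C₁ ∧
    (J.parts.card : ℤ) - V₁.card + hrank edge C₁ ≤
      (hrank edge C₁ : ℤ) - hrank edge (C₁ \ cutSub edge C₁ J) := by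
  have hJV : #J.parts ≤ #V₁ := J.card_parts_le_card
  have hJ : 2 ≤ #J.parts := by
    by_contra! hJ
    rw [cutSub_eq_empty_of_card_parts_le_one edge C₁ J (by omega), card_empty] at hach
    omega
  have hrest : hrank edge (C₁ \ cutSub edge C₁ J) ≤ #V₁ - #J.parts := by
    have hbound := hrank_le_of_finpartition edge J (F := C₁ \ cutSub edge C₁ J)
      fun e he ↦ hsub e (mem_sdiff.1 he).1
    rwa [cutSub_sdiff_cutSub, card_empty, add_zero] at hbound
  exact ⟨hJ, cutSub_nonempty edge hconn J hJ, by omega, by omega⟩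

/-- if `H₁ = (V₁, C₁)` is a connected subhypergraph with
`r(C₁) < |V₁| - 1`, and `J` is a feasible partition of `V₁` achieving
`r(C₁) = |V₁| - |J| + |δ_{H₁}(J)|`, then `|J| ≥ 2`, `δ_{H₁}(J)` is nonempty, and
`r(C₁) - r(C₁ ∖ δ_{H₁}(J)) ≥ |J| - |V₁| + r(C₁) = |δ_{H₁}(J)|`. -/
theorem stmt19 {V E : Type*} [Fintype V] [DecidableEq V] [Fintype E] [DecidableEq E]
    (edge : E → Finset V) (V₁ : Finset V) (C₁ : Finset E)
    (hV₁ : V₁.Nonempty) (hsub : ∀ e ∈ C₁, edge e ⊆ V₁)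
    (hconn : ConnectedInSub edge C₁ V₁)
    (hrk : hrank edge C₁ < V₁.card - 1)
    (J : Finpartition V₁)
    (hfeas : ∀ p ∈ J.parts, ConnectedInSub edge C₁ p)
    (hach : (hrank edge C₁ : ℤ) = (V₁.card : ℤ) - J.parts.card + (cutSub edge C₁ J).card) :
    2 ≤ J.parts.card ∧
    (cutSub edge C₁ J).Nonempty ∧
    ((cutSub edge C₁ J).card : ℤ) = (J.parts.card : ℤ) - V₁.card + hrank edge C₁ ∧
    (J.parts.card : ℤ) - V₁.card + hrank edge C₁ ≤
      (hrank edge C₁ : ℤ) - hrank edge (C₁ \ cutSub edge C₁ J) :=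
  stmt19_general edge V₁ C₁ hsub hconn hrk J hach
end
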